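/- Let K be a field of characteristic 2 with a discrete valuation v : Kˣ → ℤ, valuation ring O, and let a, b, γ ∈ Kˣ and an integer n ≥ 1 be such that v(a) = 0, v(b) = 1, v(γ) = 0, γ^{4n} = 1, a ≡ γ (mod b·O), and for every u ∈ Kˣ with v(u) = 0 one has v(u² + u + γ) = 0. Then for every x₀ ∈ K with f(x₀) ≠ 0, the valuation v(f(x₀)) is odd, where f(x₀) = a^{-4n}·b·x₀² + x₀ + a·b^{-1}. (This is the local computation at the place v_b in Lemma 3.3, showing the local invariant of the Brauer class equals 1/2 there; consequently the Brauer set is empty.) -/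
import Mathlib


/-- A discrete valuation on a field `K`: a surjective group homomorphism `v : Kˣ → ℤ`
(encoded as an integer-valued function on `K`, multiplicative and surjective on nonzero
elements) satisfying `v(x + y) ≥ min (v x) (v y)`. -/
structure DiscreteVal (K : Type*) [Field K] where
  /-- the underlying valuation function (its values at `0` are irrelevant) -/
  v : K → ℤ
  map_mul : ∀ x y : K, x ≠ 0 → y ≠ 0 → v (x * y) = v x + v y
  min_le_add : ∀ x y : K, x ≠ 0 → y ≠ 0 → x + y ≠ 0 → min (v x) (v y) ≤ v (x + y)
  surjective : ∀ m : ℤ, ∃ x : K, x ≠ 0 ∧ v x = m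

/-- `f(x) = a^{-4n}·b·x² + x + a·b⁻¹`. -/
noncomputable def fDV {K : Type*} [Field K] (a b : K) (n : ℤ) (x : K) : K :=
  a ^ (-(4 * n)) * b * x ^ 2 + x + a * b⁻¹

/-- `g(x) = a^{-8n}·b²·x² + a^{-4n}·b·x + a^{1-4n} + γ`. -/
noncomputable def gDV {K : Type*} [Field K] (a b γ : K) (n : ℤ) (x : K) : K :=
  a ^ (-(8 * n)) * b ^ 2 * x ^ 2 + a ^ (-(4 * n)) * b * x + a ^ (1 - 4 * n) + γ

namespace DiscreteVal

variable {K : Type*} [Field K] (w : DiscreteVal K)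

lemma v_one : w.v 1 = 0 := by
  have h := w.map_mul 1 1 one_ne_zero one_ne_zero
  rw [mul_one] at h
  linarith

lemma v_inv (x : K) (hx : x ≠ 0) : w.v x⁻¹ = - w.v x := by
  have h := w.map_mul x x⁻¹ hx (inv_ne_zero hx)
  rw [mul_inv_cancel₀ hx, w.v_one] at h
  linarith

lemma v_pow (x : K) (hx : x ≠ 0) : ∀ k : ℕ, w.v (x ^ k) = k * w.v x := by
  intro k
  induction k with
  | zero => simpa using w.v_one
  | succ k ih =>
      rw [pow_succ, w.map_mul _ _ (pow_ne_zero k hx) hx, ih]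
      push_cast; ring

lemma v_zpow (x : K) (hx : x ≠ 0) (z : ℤ) : w.v (x ^ z) = z * w.v x := by
  cases z with
  | ofNat k =>
      rw [Int.ofNat_eq_coe, zpow_natCast, w.v_pow x hx k]
  | negSucc k =>
      rw [zpow_negSucc, w.v_inv _ (pow_ne_zero _ hx), w.v_pow x hx, Int.negSucc_eq]
      push_cast; ring

lemma P_add (c : ℤ) (x y : K) (hx : x = 0 ∨ c ≤ w.v x) (hy : y = 0 ∨ c ≤ w.v y) :
    x + y = 0 ∨ c ≤ w.v (x + y) := by
  by_cases hx0 : x = 0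
  · subst hx0; simpa using hy
  by_cases hy0 : y = 0
  · subst hy0; simpa using hx
  by_cases h0 : x + y = 0
  · exact Or.inl h0
  right
  have h := w.min_le_add x y hx0 hy0 h0
  have hx' := hx.resolve_left hx0
  have hy' := hy.resolve_left hy0
  omega

lemma P_mul (c d : ℤ) (x y : K) (hx : x = 0 ∨ c ≤ w.v x) (hy : y = 0 ∨ d ≤ w.v y) :
    x * y = 0 ∨ c + d ≤ w.v (x * y) := by
  by_cases hx0 : x = 0
  · simp [hx0]
  by_cases hy0 : y = 0
  · simp [hy0]
  right
  rw [w.map_mul x y hx0 hy0]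
  exact add_le_add (hx.resolve_left hx0) (hy.resolve_left hy0)

variable [CharP K 2]

lemma v_add_strict (x y : K) (hx : x ≠ 0) (hy : y ≠ 0) (h : w.v x < w.v y) :
    x + y ≠ 0 ∧ w.v (x + y) = w.v x := by
  have hxy : (x + y) + y = x := by
    rw [add_assoc, CharTwo.add_self_eq_zero, add_zero]
  have hne : x + y ≠ 0 := by
    intro h0
    have : x = y := by
      have := eq_neg_of_add_eq_zero_left h0
      rwa [CharTwo.neg_eq] at this
    rw [this] at h; exact lt_irrefl _ h
  have h1 := w.min_le_add x y hx hy hne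
  have h2 := w.min_le_add (x + y) y hne hy (by rw [hxy]; exact hx)
  rw [hxy] at h2
  exact ⟨hne, by omega⟩

lemma v_add_small (s d : K) (hs : s ≠ 0) (hvs : w.v s = 0) (hd : d = 0 ∨ 1 ≤ w.v d) :
    s + d ≠ 0 ∧ w.v (s + d) = 0 := by
  by_cases hd0 : d = 0
  · subst hd0; exact ⟨by simpa using hs, by rw [add_zero, hvs]⟩
  have hd' := hd.resolve_left hd0
  have h := w.v_add_strict s d hs hd0 (by omega)
  exact ⟨h.1, by rw [h.2, hvs]⟩

end DiscreteVal

/-- The local computation at the place `v_b` in Lemma 3.3: under the stated conditions,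
`v(f(x₀))` is odd for every `x₀`.  Here `O` denotes the valuation ring
`{x : v x ≥ 0} ∪ {0}`. -/
theorem val_f_odd_at_b (K : Type*) [Field K] [CharP K 2] (w : DiscreteVal K)
    (a b γ : K) (ha0 : a ≠ 0) (hb0 : b ≠ 0) (hγ0 : γ ≠ 0) (n : ℤ) (hn : 1 ≤ n)
    (ha : w.v a = 0) (hb : w.v b = 1) (hγ : w.v γ = 0) (hγpow : γ ^ (4 * n) = 1)
    (hab : ∃ o : K, (o = 0 ∨ 0 ≤ w.v o) ∧ a = γ + b * o)
    (hunit : ∀ u : K, u ≠ 0 → w.v u = 0 →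
      u ^ 2 + u + γ ≠ 0 ∧ w.v (u ^ 2 + u + γ) = 0) :
    ∀ x₀ : K, fDV a b n x₀ ≠ 0 → Odd (w.v (fDV a b n x₀)) := by
  intro x₀ hf
  obtain ⟨o, ho, hao⟩ := hab
  have h2K : (2 : K) = 0 := by exact_mod_cast CharP.cast_eq_zero K 2
  set m : ℕ := (4 * n - 1).toNat with hm
  have hmz : (m : ℤ) = 4 * n - 1 := Int.toNat_of_nonneg (by linarith)
  have hva : ∀ k : ℕ, w.v (a ^ k) = 0 := fun k => by
    rw [w.v_pow a ha0 k, ha, mul_zero]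
  have hvγ : ∀ k : ℕ, w.v (γ ^ k) = 0 := fun k => by
    rw [w.v_pow γ hγ0 k, hγ, mul_zero]
  have haγ : a + γ = b * o := by
    rw [hao, show γ + b * o + γ = b * o + (γ + γ) by ring, CharTwo.add_self_eq_zero,
      add_zero]
  -- bound on b * o
  have hbo : b * o = 0 ∨ 1 ≤ w.v (b * o) := by
    have := w.P_mul 1 0 b o (Or.inr hb.ge) ho
    simpa using this
  -- key induction
  have key : ∀ k : ℕ, a ^ k + γ ^ k = 0 ∨ 1 ≤ w.v (a ^ k + γ ^ k) := by
    intro k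
    induction k with
    | zero => left; simpa using CharTwo.add_self_eq_zero (1 : K)
    | succ k ih =>
      have hident : a ^ (k+1) + γ ^ (k+1) = a * (a ^ k + γ ^ k) + γ ^ k * (a + γ) := by
        linear_combination (-(a * γ ^ k)) * h2K
      rw [hident]
      apply w.P_add 1
      · have := w.P_mul 0 1 a (a ^ k + γ ^ k) (Or.inr ha.ge) ih
        simpa using this
      · rw [haγ]
        have := w.P_mul 0 1 (γ ^ k) (b * o) (Or.inr (hvγ k).ge) hbo
        simpa using this
  -- δ
  have hA : (a : K) ^ m ≠ 0 := pow_ne_zero _ ha0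
  have hG : (γ : K) ^ m ≠ 0 := pow_ne_zero _ hγ0
  have h4n1 : a ^ (1 - 4 * n : ℤ) = (a ^ m)⁻¹ := by
    rw [show (1 - 4 * n : ℤ) = -(m : ℤ) by omega, zpow_neg, zpow_natCast]
  have hγm : γ = (γ ^ m)⁻¹ := by
    have h1 : γ ^ (m + 1) = 1 := by
      calc γ ^ (m + 1) = γ ^ (((m + 1 : ℕ)) : ℤ) := (zpow_natCast γ (m + 1)).symm
        _ = γ ^ (4 * n) := by rw [show (((m + 1 : ℕ)) : ℤ) = 4 * n by omega]
        _ = 1 := hγpow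
    rw [pow_succ] at h1
    exact eq_inv_of_mul_eq_one_right h1
  set δ : K := a ^ (1 - 4 * n : ℤ) + γ with hδdef
  have hδ : δ = 0 ∨ 1 ≤ w.v δ := by
    have hrw : δ = (a ^ m + γ ^ m) * ((a ^ m) * (γ ^ m))⁻¹ := by
      rw [hδdef, h4n1]
      conv_lhs => rw [hγm]
      field_simp
      ring
    rw [hrw]
    have hinv : ((a ^ m) * (γ ^ m))⁻¹ = 0 ∨ 0 ≤ w.v (((a ^ m) * (γ ^ m))⁻¹) := by
      right
      rw [w.v_inv _ (mul_ne_zero hA hG), w.map_mul _ _ hA hG, hva, hvγ]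
      norm_num
    have := w.P_mul 1 0 _ _ (key m) hinv
    simpa using this
  -- the multiplier c and the substitution y
  set c : K := a ^ (-(4 * n) : ℤ) * b with hc
  have hazn : (a : K) ^ (-(4 * n) : ℤ) ≠ 0 := zpow_ne_zero _ ha0
  have hc0 : c ≠ 0 := mul_ne_zero hazn hb0
  have hvc : w.v c = 1 := by
    rw [hc, w.map_mul _ _ hazn hb0, w.v_zpow a ha0, ha, hb]; ring
  set y : K := c * x₀ with hy
  have hγδ : γ + δ = a ^ (1 - 4 * n : ℤ) := by
    rw [hδdef, show γ + (a ^ (1 - 4 * n : ℤ) + γ) = a ^ (1 - 4 * n : ℤ) + (γ + γ) by ring,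
      CharTwo.add_self_eq_zero, add_zero]
  have hA1 : a ^ (1 - 4 * n : ℤ) = a ^ (-(4 * n) : ℤ) * a := by
    rw [show (1 - 4 * n : ℤ) = -(4 * n) + 1 by ring, zpow_add₀ ha0, zpow_one]
  have hF : c * fDV a b n x₀ = y ^ 2 + y + (γ + δ) := by
    have hbb : b * b⁻¹ = 1 := mul_inv_cancel₀ hb0
    rw [hγδ, hy, hc, fDV, hA1]
    linear_combination (a ^ (-(4 * n)) * a) * hbb
  have hF0 : c * fDV a b n x₀ ≠ 0 := mul_ne_zero hc0 hf
  have heven : Even (w.v (c * fDV a b n x₀)) := by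
    rw [hF]
    rcases eq_or_ne y 0 with hy0 | hy0
    · -- y = 0 : value is γ + δ, valuation 0
      have h := w.v_add_small γ δ hγ0 hγ hδ
      rw [hy0, show (0:K) ^ 2 + 0 + (γ + δ) = γ + δ by ring, h.2]
      exact Even.zero
    rcases lt_trichotomy (w.v y) 0 with hvy | hvy | hvy
    · -- v y < 0
      have hgd := w.v_add_small γ δ hγ0 hγ hδ
      have ht := w.v_add_strict y (γ + δ) hy0 hgd.1 (by omega)
      have hy2 : (y : K) ^ 2 ≠ 0 := pow_ne_zero _ hy0
      have hvy2 : w.v (y ^ 2) = 2 * w.v y := by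
        rw [w.v_pow y hy0 2]; norm_num
      have hfin := w.v_add_strict (y ^ 2) (y + (γ + δ)) hy2 ht.1
        (by rw [hvy2, ht.2]; omega)
      rw [show y ^ 2 + y + (γ + δ) = y ^ 2 + (y + (γ + δ)) by ring, hfin.2, hvy2]
      exact ⟨w.v y, by ring⟩
    · -- v y = 0
      obtain ⟨hs0, hvs⟩ := hunit y hy0 hvy
      have h := w.v_add_small (y ^ 2 + y + γ) δ hs0 hvs hδ
      rw [show y ^ 2 + y + (γ + δ) = (y ^ 2 + y + γ) + δ by ring, h.2]
      exact Even.zero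
    · -- v y > 0
      have hu : y ^ 2 + y + δ = 0 ∨ 1 ≤ w.v (y ^ 2 + y + δ) := by
        apply w.P_add 1
        apply w.P_add 1
        · right; rw [w.v_pow y hy0 2]; push_cast; omega
        · exact Or.inr (by omega)
        · exact hδ
      have h := w.v_add_small γ (y ^ 2 + y + δ) hγ0 hγ hu
      rw [show y ^ 2 + y + (γ + δ) = γ + (y ^ 2 + y + δ) by ring, h.2]
      exact Even.zero
  have hvf : w.v (fDV a b n x₀) = w.v (c * fDV a b n x₀) - 1 := by
    rw [w.map_mul c _ hc0 hf, hvc]; ring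
  rw [hvf]
  exact heven.sub_odd odd_one
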